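/- arXiv:2502.01904 — 2 statements merged into one kernel-verified Lean document; each statement's English description precedes it below -/
import Mathlib

section
/- Under the setting of the one-round estimator, the variance of f₂ = Σ_{v ∈ U} (A'[u,v]-p)(A'[v,w]-p)/(1-2p)² equals (p²(1-p)²/(1-2p)⁴)·|U| + (p(1-p)/(1-2p)²)·(deg(u) + deg(w)). -/
/-! For distinct `v` the summands `(X v - p) (Y v - p)` are functions of disjoint pairs of
independent bits, so the variance of the sum is the sum of their variances. For one `v`,
`η = X v - p` and `θ = Y v - p` are independent, each with variance `p (1 - p)` (a shifted
Bernoulli variable), and with means `(1 - 2p) adj u v` and `(1 - 2p) adj v w`. The product formula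
`Var (η θ) = Var η Var θ + Var η (E θ)² + Var θ (E η)²` together with `adj² = adj` gives
`p² (1 - p)² + p (1 - p) (1 - 2p)² (adj u v + adj v w)`; summing over `U` and dividing by
`(1 - 2p)⁴` yields the claim. -/

open MeasureTheory ProbabilityTheory Finset

section ZeroOneValued

variable {Ω : Type*} [MeasurableSpace Ω] {μ : Measure Ω} {B : Ω → ℝ}

lemma integral_eq_measureReal_of_zero_one (hB : Measurable B) (hv : ∀ ω, B ω = 0 ∨ B ω = 1) :
    μ[B] = μ.real {ω | B ω = 1} := by
  have hind : B = {ω | B ω = 1}.indicator 1 := by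
    funext ω
    rcases hv ω with h | h <;> simp [h]
  conv_lhs => rw [hind]
  exact integral_indicator_one (hB (measurableSet_singleton 1))

lemma memLp_top_of_zero_one (hB : Measurable B) (hv : ∀ ω, B ω = 0 ∨ B ω = 1) :
    MemLp B ⊤ μ :=
  memLp_top_of_bound hB.aestronglyMeasurable 1 <| ae_of_all _ fun ω => by
    rcases hv ω with h | h <;> simp [h]

lemma memLp_two_of_zero_one [IsFiniteMeasure μ] (hB : Measurable B)
    (hv : ∀ ω, B ω = 0 ∨ B ω = 1) : MemLp B 2 μ :=
  (memLp_top_of_zero_one hB hv).mono_exponent le_top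

lemma variance_of_zero_one [IsProbabilityMeasure μ] (hB : Measurable B)
    (hv : ∀ ω, B ω = 0 ∨ B ω = 1) : Var[B; μ] = μ[B] * (1 - μ[B]) := by
  have hsq : B ^ 2 = B := by
    funext ω
    rcases hv ω with h | h <;> simp [h]
  rw [variance_eq_sub (memLp_two_of_zero_one hB hv), hsq]
  ring

variable {a p : ℝ}

lemma integral_of_zero_one_of_measureReal_eq [IsProbabilityMeasure μ] (hB : Measurable B)
    (hv : ∀ ω, B ω = 0 ∨ B ω = 1) (ha : a = 0 ∨ a = 1)
    (h : μ.real {ω | B ω = a} = 1 - p) : μ[B] = p + (1 - 2 * p) * a := by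
  rw [integral_eq_measureReal_of_zero_one hB hv]
  rcases ha with rfl | rfl
  · have hcompl : {ω | B ω = 1} = {ω | B ω = 0}ᶜ := by
      ext ω
      rcases hv ω with h' | h' <;> simp [h']
    have h0 : MeasurableSet {ω | B ω = 0} := hB (measurableSet_singleton 0)
    rw [hcompl, measureReal_compl h0, h, probReal_univ]
    ring
  · rw [h]
    ring

lemma variance_of_zero_one_of_measureReal_eq [IsProbabilityMeasure μ] (hB : Measurable B)
    (hv : ∀ ω, B ω = 0 ∨ B ω = 1) (ha : a = 0 ∨ a = 1)
    (h : μ.real {ω | B ω = a} = 1 - p) : Var[B; μ] = p * (1 - p) := by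
  rw [variance_of_zero_one hB hv, integral_of_zero_one_of_measureReal_eq hB hv ha h]
  rcases ha with rfl | rfl <;> ring

end ZeroOneValued

section IndependentProduct

variable {Ω : Type*} [MeasurableSpace Ω] {μ : Measure Ω} {X Y : Ω → ℝ}

lemma ProbabilityTheory.IndepFun.sq (hXY : X ⟂ᵢ[μ] Y) :
    (fun ω => X ω ^ 2) ⟂ᵢ[μ] (fun ω => Y ω ^ 2) :=
  hXY.comp (φ := fun x : ℝ => x ^ 2) (ψ := fun x : ℝ => x ^ 2) (by fun_prop) (by fun_prop)

lemma ProbabilityTheory.IndepFun.memLp_two_mul (hXY : X ⟂ᵢ[μ] Y) (hX : MemLp X 2 μ)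
    (hY : MemLp Y 2 μ) : MemLp (X * Y) 2 μ := by
  refine (memLp_two_iff_integrable_sq (hX.1.mul hY.1)).2 ?_
  simp only [Pi.mul_apply, mul_pow]
  exact hXY.sq.integrable_mul hX.integrable_sq hY.integrable_sq

lemma ProbabilityTheory.IndepFun.variance_mul [IsProbabilityMeasure μ] (hXY : X ⟂ᵢ[μ] Y)
    (hX : MemLp X 2 μ) (hY : MemLp Y 2 μ) :
    Var[X * Y; μ] = Var[X; μ] * Var[Y; μ] + Var[X; μ] * μ[Y] ^ 2 + Var[Y; μ] * μ[X] ^ 2 := by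
  rw [variance_eq_sub (hXY.memLp_two_mul hX hY), variance_eq_sub hX, variance_eq_sub hY]
  simp only [Pi.pow_apply, Pi.mul_apply, mul_pow]
  rw [hXY.sq.integral_fun_mul_eq_mul_integral (hX.1.pow 2) (hY.1.pow 2),
    hXY.integral_fun_mul_eq_mul_integral hX.1 hY.1]
  ring

end IndependentProduct

section RandomizedResponse

variable {Ω : Type*} [MeasurableSpace Ω] {μ : Measure Ω} {X Y : Ω → ℝ} {a b p : ℝ}

lemma memLp_two_mul_sub_of_zero_one [IsFiniteMeasure μ] (hmX : Measurable X) (hmY : Measurable Y)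
    (hvX : ∀ ω, X ω = 0 ∨ X ω = 1) (hvY : ∀ ω, Y ω = 0 ∨ Y ω = 1) :
    MemLp (fun ω => (X ω - p) * (Y ω - p)) 2 μ :=
  ((memLp_two_of_zero_one hmY hvY).sub (memLp_const p)).mul'
    ((memLp_top_of_zero_one hmX hvX).sub (memLp_const p))

lemma variance_mul_sub_of_zero_one [IsProbabilityMeasure μ] (hXY : X ⟂ᵢ[μ] Y)
    (hmX : Measurable X) (hmY : Measurable Y)
    (hvX : ∀ ω, X ω = 0 ∨ X ω = 1) (hvY : ∀ ω, Y ω = 0 ∨ Y ω = 1)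
    (ha : a = 0 ∨ a = 1) (hb : b = 0 ∨ b = 1)
    (hX : μ.real {ω | X ω = a} = 1 - p) (hY : μ.real {ω | Y ω = b} = 1 - p) :
    Var[fun ω => (X ω - p) * (Y ω - p); μ] =
      p ^ 2 * (1 - p) ^ 2 + p * (1 - p) * (1 - 2 * p) ^ 2 * (a + b) := by
  have hX2 := memLp_two_of_zero_one (μ := μ) hmX hvX
  have hY2 := memLp_two_of_zero_one (μ := μ) hmY hvY
  have hind : (fun ω => X ω - p) ⟂ᵢ[μ] (fun ω => Y ω - p) :=
    hXY.comp (φ := fun x : ℝ => x - p) (ψ := fun x : ℝ => x - p) (by fun_prop) (by fun_prop)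
  have hmean {Z : Ω → ℝ} (hZ : Integrable Z μ) : μ[fun ω => Z ω - p] = μ[Z] - p := by
    rw [integral_sub hZ (integrable_const p), integral_const, probReal_univ, one_smul]
  rw [← Pi.mul_def, hind.variance_mul (hX2.sub (memLp_const p)) (hY2.sub (memLp_const p)),
    variance_sub_const hmX.aestronglyMeasurable, variance_sub_const hmY.aestronglyMeasurable,
    hmean (hX2.integrable one_le_two), hmean (hY2.integrable one_le_two),
    variance_of_zero_one_of_measureReal_eq hmX hvX ha hX,
    variance_of_zero_one_of_measureReal_eq hmY hvY hb hY,
    integral_of_zero_one_of_measureReal_eq hmX hvX ha hX,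
    integral_of_zero_one_of_measureReal_eq hmY hvY hb hY]
  rcases ha with rfl | rfl <;> rcases hb with rfl | rfl <;> ring

end RandomizedResponse

lemma Finset.sum_eq_card_filter_of_zero_one {ι R : Type*} [NonAssocSemiring R] [DecidableEq R]
    (s : Finset ι) {f : ι → R} (hf : ∀ i ∈ s, f i = 0 ∨ f i = 1) :
    ∑ i ∈ s, f i = #(s.filter (f · = 1)) := by
  rw [← Finset.sum_boole]
  refine Finset.sum_congr rfl fun i hi => ?_
  rcases hf i hi with h | h <;> simp [h]

section BoolIndexedFamily

variable {Ω V β : Type*} [MeasurableSpace Ω] {μ : Measure Ω} [MeasurableSpace β]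
  {X Y : V → Ω → β}

lemma indepFun_of_iIndepFun_bool
    (hind : iIndepFun (fun i : V × Bool => if i.2 then X i.1 else Y i.1) μ) (v : V) :
    X v ⟂ᵢ[μ] Y v := by
  simpa using hind.indepFun (i := (v, true)) (j := (v, false)) (by simp)

lemma indepFun_prodMk_of_iIndepFun_bool
    (hind : iIndepFun (fun i : V × Bool => if i.2 then X i.1 else Y i.1) μ)
    (hmX : ∀ v, Measurable (X v)) (hmY : ∀ v, Measurable (Y v)) {i j : V} (hij : i ≠ j) :
    (fun ω => (X i ω, Y i ω)) ⟂ᵢ[μ] (fun ω => (X j ω, Y j ω)) := by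
  have hm : ∀ k : V × Bool, Measurable (if k.2 then X k.1 else Y k.1) := fun
    | (v, true) => hmX v
    | (v, false) => hmY v
  simpa using hind.indepFun_prodMk_prodMk hm (i, true) (i, false) (j, true) (j, false)
    (by simp [hij]) (by simp) (by simp) (by simp [hij])

end BoolIndexedFamily

theorem oneRound_variance_general {Ω V : Type*} [MeasurableSpace Ω] (μ : Measure Ω)
    [IsProbabilityMeasure μ]
    (U : Finset V) (u w : V) (adj : V → V → ℝ)
    (hadj : ∀ i j, adj i j = 0 ∨ adj i j = 1)
    (p : ℝ) (hp : p ∈ Set.Ioo (0 : ℝ) (1 / 2))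
    (X Y : V → Ω → ℝ)
    (hmX : ∀ v, Measurable (X v)) (hmY : ∀ v, Measurable (Y v))
    (hvX : ∀ v ω, X v ω = 0 ∨ X v ω = 1) (hvY : ∀ v ω, Y v ω = 0 ∨ Y v ω = 1)
    (hX : ∀ v ∈ U, μ {ω | X v ω = adj u v} = ENNReal.ofReal (1 - p))
    (hY : ∀ v ∈ U, μ {ω | Y v ω = adj v w} = ENNReal.ofReal (1 - p))
    (hind : iIndepFun
      (fun i : V × Bool => if i.2 then X i.1 else Y i.1) μ) :
    variance (fun ω => ∑ v ∈ U, (X v ω - p) * (Y v ω - p) / (1 - 2 * p) ^ 2) μ =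
      p ^ 2 * (1 - p) ^ 2 / (1 - 2 * p) ^ 4 * U.card +
        p * (1 - p) / (1 - 2 * p) ^ 2 *
          ((U.filter (fun v => adj u v = 1)).card + (U.filter (fun v => adj v w = 1)).card) := by
  have hp1 : p < 1 / 2 := hp.2
  have hreal {s : Set Ω} (hs : μ s = ENNReal.ofReal (1 - p)) : μ.real s = 1 - p := by
    rw [measureReal_def, hs, ENNReal.toReal_ofReal (by linarith)]
  have hvar (v : V) (hv : v ∈ U) : Var[fun ω => (X v ω - p) * (Y v ω - p); μ] =
      p ^ 2 * (1 - p) ^ 2 + p * (1 - p) * (1 - 2 * p) ^ 2 * (adj u v + adj v w) :=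
    variance_mul_sub_of_zero_one (indepFun_of_iIndepFun_bool hind v) (hmX v) (hmY v) (hvX v)
      (hvY v) (hadj u v) (hadj v w) (hreal (hX v hv)) (hreal (hY v hv))
  have hpair : Set.Pairwise ↑U fun i j =>
      (fun ω => (X i ω - p) * (Y i ω - p)) ⟂ᵢ[μ]
        (fun ω => (X j ω - p) * (Y j ω - p)) := by
    have hg : Measurable fun q : ℝ × ℝ => (q.1 - p) * (q.2 - p) := by fun_prop
    exact fun i _ j _ hij => (indepFun_prodMk_of_iIndepFun_bool hind hmX hmY hij).comp hg hg
  have hsum : (fun ω => ∑ v ∈ U, (X v ω - p) * (Y v ω - p) / (1 - 2 * p) ^ 2) =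
      fun ω =>
        (∑ v ∈ U, fun ω => (X v ω - p) * (Y v ω - p)) ω * ((1 - 2 * p) ^ 2)⁻¹ := by
    simp only [Finset.sum_apply, Finset.sum_mul, div_eq_mul_inv]
  rw [hsum, variance_mul_const, IndepFun.variance_sum (fun v _ =>
      memLp_two_mul_sub_of_zero_one (hmX v) (hmY v) (hvX v) (hvY v)) hpair,
    Finset.sum_congr rfl hvar, Finset.sum_add_distrib, Finset.sum_const, nsmul_eq_mul,
    ← Finset.mul_sum, Finset.sum_add_distrib,
    Finset.sum_eq_card_filter_of_zero_one U fun v _ => hadj u v,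
    Finset.sum_eq_card_filter_of_zero_one U fun v _ => hadj v w]
  have hc : 1 - 2 * p ≠ 0 := by linarith
  field_simp

/-- Variance of the one-round estimator: with all noisy bits mutually independent
randomized-response perturbations with flipping probability `p`, the estimator
`f₂ = Σ_{v ∈ U} (A'[u,v]-p)(A'[v,w]-p)/(1-2p)²` has variance
`p²(1-p)²/(1-2p)⁴·|U| + p(1-p)/(1-2p)²·(deg u + deg w)`. -/
theorem oneRound_variance {Ω V : Type*} [MeasurableSpace Ω] (μ : Measure Ω)
    [IsProbabilityMeasure μ] [DecidableEq V]
    (U : Finset V) (u w : V) (adj : V → V → ℝ)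
    (hadj : ∀ i j, adj i j = 0 ∨ adj i j = 1)
    (p : ℝ) (hp : p ∈ Set.Ioo (0 : ℝ) (1 / 2))
    (X Y : V → Ω → ℝ)
    (hmX : ∀ v, Measurable (X v)) (hmY : ∀ v, Measurable (Y v))
    (hvX : ∀ v ω, X v ω = 0 ∨ X v ω = 1) (hvY : ∀ v ω, Y v ω = 0 ∨ Y v ω = 1)
    (hX : ∀ v ∈ U, μ {ω | X v ω = adj u v} = ENNReal.ofReal (1 - p))
    (hY : ∀ v ∈ U, μ {ω | Y v ω = adj v w} = ENNReal.ofReal (1 - p))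
    (hind : iIndepFun
      (fun i : V × Bool => if i.2 then X i.1 else Y i.1) μ) :
    variance (fun ω => ∑ v ∈ U, (X v ω - p) * (Y v ω - p) / (1 - 2 * p) ^ 2) μ =
      p ^ 2 * (1 - p) ^ 2 / (1 - 2 * p) ^ 4 * U.card +
        p * (1 - p) / (1 - 2 * p) ^ 2 *
          ((U.filter (fun v => adj u v = 1)).card + (U.filter (fun v => adj v w = 1)).card) :=
  oneRound_variance_general μ U u w adj hadj p hp X Y hmX hmY hvX hvY hX hY hind
end

section
/- Under the setting of the single-source estimator with flipping probability p ∈ (0,1/2), Laplace noise of scale (1-p)/((1-2p)ε₂), and d_u = deg(u), the expected L2 loss (= variance) of f̃_u equals (p(1-p)/(1-2p)²)·d_u + 2(1-p)²/((1-2p)²ε₂²). -/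
/-!
Each centred and rescaled randomized-response bit `(X v - p)/(1 - 2p)` is an affine image of a
`{0,1}`-valued variable that hits one of its two values with probability `1 - p`, so its variance
is `p(1 - p)/(1 - 2p)²`. The bits are independent of each other and of the Laplace noise, so the
variances of all `d_u + 1` summands add up.
-/

open MeasureTheory ProbabilityTheory

section ZeroOneValued

variable {Ω : Type*} [MeasurableSpace Ω] {μ : Measure Ω} {X : Ω → ℝ}

lemma memLp_of_zero_one_valued [IsFiniteMeasure μ] (hm : Measurable X)
    (hv : ∀ ω, X ω = 0 ∨ X ω = 1) (q : ENNReal) : MemLp X q μ :=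
  .of_bound hm.aestronglyMeasurable 1 <| .of_forall fun ω => by
    rcases hv ω with h | h <;> simp [h]

lemma measureReal_eq_zero_add_measureReal_eq_one [IsProbabilityMeasure μ] (hm : Measurable X)
    (hv : ∀ ω, X ω = 0 ∨ X ω = 1) :
    μ.real {ω | X ω = 0} + μ.real {ω | X ω = 1} = 1 := by
  have hcompl : {ω | X ω = 0} = {ω | X ω = 1}ᶜ := by
    ext ω; rcases hv ω with h | h <;> simp [h]
  have hA : MeasurableSet {ω | X ω = 1} := hm (measurableSet_singleton 1)
  rw [hcompl, probReal_compl_eq_one_sub hA]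
  ring

lemma variance_of_zero_one_valued [IsProbabilityMeasure μ] (hm : Measurable X)
    (hv : ∀ ω, X ω = 0 ∨ X ω = 1) :
    variance X μ = μ.real {ω | X ω = 1} * μ.real {ω | X ω = 0} := by
  have hsq : X ^ 2 = X := by funext ω; rcases hv ω with h | h <;> simp [h]
  have hindicator : X = {ω | X ω = 1}.indicator 1 := by
    funext ω; rcases hv ω with h | h <;> simp [h]
  have hmean : μ[X] = μ.real {ω | X ω = 1} := by
    have hA : MeasurableSet {ω | X ω = 1} := hm (measurableSet_singleton 1)
    rw [integral_congr_ae (.of_forall (congrFun hindicator)), integral_indicator_one hA]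
  have hzero : μ.real {ω | X ω = 0} = 1 - μ.real {ω | X ω = 1} := by
    linarith [measureReal_eq_zero_add_measureReal_eq_one (μ := μ) hm hv]
  rw [variance_eq_sub (memLp_of_zero_one_valued hm hv 2), hsq, hmean, hzero]
  ring

lemma variance_of_zero_one_valued_of_measureReal_eq [IsProbabilityMeasure μ]
    (hm : Measurable X) (hv : ∀ ω, X ω = 0 ∨ X ω = 1) {t q : ℝ} (ht : t = 0 ∨ t = 1)
    (hq : μ.real {ω | X ω = t} = q) :
    variance X μ = q * (1 - q) := by
  have hsum := measureReal_eq_zero_add_measureReal_eq_one (μ := μ) hm hv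
  rw [variance_of_zero_one_valued hm hv]
  rcases ht with rfl | rfl
  · rw [hq, show μ.real {ω | X ω = 1} = 1 - q by linarith]; ring
  · rw [hq, show μ.real {ω | X ω = 0} = 1 - q by linarith]

lemma variance_sub_const_div [IsProbabilityMeasure μ] (hX : AEStronglyMeasurable X μ)
    (a c : ℝ) : variance (fun ω => (X ω - a) / c) μ = variance X μ / c ^ 2 := by
  simp_rw [div_eq_mul_inv]
  rw [variance_mul_const, variance_sub_const hX, inv_pow]

end ZeroOneValued

lemma ProbabilityTheory.iIndepFun.variance_sum {Ω ι : Type*} [MeasurableSpace Ω]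
    {μ : Measure Ω} {X : ι → Ω → ℝ} (hX : iIndepFun X μ) {s : Finset ι}
    (hs : ∀ i ∈ s, MemLp (X i) 2 μ) :
    variance (∑ i ∈ s, X i) μ = ∑ i ∈ s, variance (X i) μ :=
  IndepFun.variance_sum hs fun _ _ _ _ hij => hX.indepFun hij

theorem singleSource_variance_general {Ω V : Type*} [MeasurableSpace Ω] (μ : Measure Ω)
    [IsProbabilityMeasure μ] [DecidableEq V]
    (Nu Nw : Finset V)
    (p ε₂ : ℝ) (hp : p ∈ Set.Ioo (0 : ℝ) (1 / 2)) (hε₂ : 0 < ε₂)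
    (X : V → Ω → ℝ)
    (hmX : ∀ v, Measurable (X v)) (hvX : ∀ v ω, X v ω = 0 ∨ X v ω = 1)
    (hX : ∀ v ∈ Nu,
      μ {ω | X v ω = (if v ∈ Nw then (1 : ℝ) else 0)} = ENNReal.ofReal (1 - p))
    (hXind : iIndepFun X μ)
    (Z : Ω → ℝ) (hmZ : Measurable Z)
    (hZvar : variance Z μ = 2 * ((1 - p) / ((1 - 2 * p) * ε₂)) ^ 2)
    (hZind : IndepFun Z (fun ω => ∑ v ∈ Nu, (X v ω - p) / (1 - 2 * p)) μ) :
    variance (fun ω => (∑ v ∈ Nu, (X v ω - p) / (1 - 2 * p)) + Z ω) μ =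
      p * (1 - p) / (1 - 2 * p) ^ 2 * Nu.card +
        2 * (1 - p) ^ 2 / ((1 - 2 * p) ^ 2 * ε₂ ^ 2) := by
  have hp' : 0 < 1 - p := by linarith [hp.2]
  have hc : 0 < 1 - 2 * p := by linarith [hp.2]
  set Y : V → Ω → ℝ := fun v ω => (X v ω - p) / (1 - 2 * p)
  have hYind : iIndepFun Y μ :=
    hXind.comp (fun _ x => (x - p) / (1 - 2 * p)) fun _ => by fun_prop
  have hmemY (v : V) : MemLp (Y v) 2 μ := by
    simpa only [Y, Pi.sub_apply, div_eq_mul_inv] using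
      ((memLp_of_zero_one_valued (hmX v) (hvX v) 2).sub (memLp_const p)).mul_const (1 - 2 * p)⁻¹
  have hvarY : ∀ v ∈ Nu, variance (Y v) μ = p * (1 - p) / (1 - 2 * p) ^ 2 := by
    intro v hv
    have hflip : μ.real {ω | X v ω = if v ∈ Nw then 1 else 0} = 1 - p := by
      rw [measureReal_def, hX v hv, ENNReal.toReal_ofReal hp'.le]
    rw [variance_sub_const_div (hmX v).aestronglyMeasurable,
      variance_of_zero_one_valued_of_measureReal_eq (hmX v) (hvX v) (by split_ifs <;> simp) hflip]
    ring
  have hmemZ : MemLp Z 2 μ := memLp_two_of_variance_ne_zero hmZ.aestronglyMeasurable <| by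
    rw [hZvar]; exact (mul_pos two_pos (pow_pos (div_pos hp' (mul_pos hc hε₂)) 2)).ne'
  have hsum : (fun ω => ∑ v ∈ Nu, (X v ω - p) / (1 - 2 * p)) = ∑ v ∈ Nu, Y v := by
    ext; simp [Y]
  rw [show (fun ω => (∑ v ∈ Nu, (X v ω - p) / (1 - 2 * p)) + Z ω) = (∑ v ∈ Nu, Y v) + Z by
      rw [← hsum]; rfl,
    IndepFun.variance_add (memLp_finsetSum' _ fun v _ => hmemY v) hmemZ (hsum ▸ hZind.symm),
    hYind.variance_sum fun v _ => hmemY v, Finset.sum_congr rfl hvarY, Finset.sum_const,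
    nsmul_eq_mul, hZvar]
  field_simp

/-- Expected L2 loss (= variance, by unbiasedness) of the single-source estimator:
with mutually independent randomized-response bits (flipping probability `p`) and an
independent Laplace noise `Z` of scale `(1-p)/((1-2p)ε₂)` (hence variance `2b²`, mean 0),
the variance of `f̃_u` equals `p(1-p)/(1-2p)²·d_u + 2(1-p)²/((1-2p)²ε₂²)`,
where `d_u = |N(u)|`. -/
theorem singleSource_variance {Ω V : Type*} [MeasurableSpace Ω] (μ : Measure Ω)
    [IsProbabilityMeasure μ] [DecidableEq V]
    (Nu Nw : Finset V)
    (p ε₂ : ℝ) (hp : p ∈ Set.Ioo (0 : ℝ) (1 / 2)) (hε₂ : 0 < ε₂)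
    (X : V → Ω → ℝ)
    (hmX : ∀ v, Measurable (X v)) (hvX : ∀ v ω, X v ω = 0 ∨ X v ω = 1)
    (hX : ∀ v ∈ Nu,
      μ {ω | X v ω = (if v ∈ Nw then (1 : ℝ) else 0)} = ENNReal.ofReal (1 - p))
    (hXind : iIndepFun X μ)
    (Z : Ω → ℝ) (hmZ : Measurable Z)
    (hZmean : ∫ ω, Z ω ∂μ = 0)
    (hZvar : variance Z μ = 2 * ((1 - p) / ((1 - 2 * p) * ε₂)) ^ 2)
    (hZind : IndepFun Z (fun ω => ∑ v ∈ Nu, (X v ω - p) / (1 - 2 * p)) μ) :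
    variance (fun ω => (∑ v ∈ Nu, (X v ω - p) / (1 - 2 * p)) + Z ω) μ =
      p * (1 - p) / (1 - 2 * p) ^ 2 * Nu.card +
        2 * (1 - p) ^ 2 / ((1 - 2 * p) ^ 2 * ε₂ ^ 2) :=
  singleSource_variance_general μ Nu Nw p ε₂ hp hε₂ X hmX hvX hX hXind Z hmZ hZvar hZind
end
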